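/- arXiv:1104.0059 — 2 statements merged into one kernel-verified Lean document; each statement's English description precedes it below -/
import Mathlib

section
/- Let X = {X(t), t ∈ ℝ^d} be a stochastically continuous and proper random field with values in ℝ^m which is wide-sense operator-self-similar with time-variable scaling exponent E ∈ Q(ℝ^d), and let D ∈ M(ℝ^m) be such that {X(r^E t), t ∈ ℝ^d} ≡fdd {r^D X(t) + b_r(t), t ∈ ℝ^d} for all r > 0 with (r,t) ↦ b_r(t) continuous on (0,∞)×ℝ^d. Then the function b_r(t) is uniquely determined by E and D, and it satisfies the cocycle equation b_{r₁ r₂}(t) = b_{r₁}(r₂^E t) + r₁^D b_{r₂}(t) = b_{r₂}(r₁^E t) + r₂^D b_{r₁}(t) for all r₁, r₂ > 0 and t ∈ ℝ^d. -/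
open MeasureTheory Filter Matrix Topology Set
open scoped ENNReal NNReal

/-- `mpow r A` is `r^A := exp((ln r) A)` for `r > 0` and a real square matrix `A`. -/
noncomputable def mpow {n : ℕ} (r : ℝ) (A : Matrix (Fin n) (Fin n) ℝ) :
    Matrix (Fin n) (Fin n) ℝ :=
  NormedSpace.exp (Real.log r • A)

/-- The set of (complex) eigenvalues of a real square matrix. -/
def matSpectrum {n : ℕ} (A : Matrix (Fin n) (Fin n) ℝ) : Set ℂ :=
  spectrum ℂ (A.map (Complex.ofReal))

/-- `QSet n` is `Q(ℝⁿ)`: matrices whose eigenvalues all have positive real part. -/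
def QSet (n : ℕ) : Set (Matrix (Fin n) (Fin n) ℝ) :=
  {A | ∀ μ ∈ matSpectrum A, 0 < μ.re}

/-- `MSet n` is `M(ℝⁿ)`: matrices whose eigenvalues all have nonnegative real part and
such that every eigenvalue with zero real part is a simple root of the minimal polynomial. -/
def MSet (n : ℕ) : Set (Matrix (Fin n) (Fin n) ℝ) :=
  {A | ∀ μ ∈ matSpectrum A, 0 ≤ μ.re ∧
    (μ.re = 0 → (minpoly ℂ (A.map (Complex.ofReal))).rootMultiplicity μ = 1)}

/-- Equality of all finite-dimensional distributions of two random fields. -/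
def IdentFDD {Ω T β : Type*} [MeasurableSpace Ω] [MeasurableSpace β]
    (P : Measure Ω) (Y Z : T → Ω → β) : Prop :=
  ∀ (k : ℕ) (t : Fin k → T),
    P.map (fun ω i => Y (t i) ω) = P.map (fun ω i => Z (t i) ω)

/-- Stochastic continuity: `X s → X t` in probability whenever `s → t`. -/
def StochContinuous {Ω : Type*} [MeasurableSpace Ω] (P : Measure Ω) {d m : ℕ}
    (X : (Fin d → ℝ) → Ω → (Fin m → ℝ)) : Prop :=
  ∀ (t : Fin d → ℝ), ∀ ε > (0 : ℝ),
    Tendsto (fun s => P {ω | ε ≤ dist (X s ω) (X t ω)}) (𝓝 t) (𝓝 0)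

/-- A distribution on `ℝ^m` is full if its support is not contained in any proper
hyperplane; equivalently, it does not give full mass to any hyperplane. -/
def IsFullMeasure {m : ℕ} (μ : Measure (Fin m → ℝ)) : Prop :=
  ∀ (y : Fin m → ℝ), y ≠ 0 → ∀ c : ℝ, μ {x | ∑ i, x i * y i = c} ≠ 1

/-- A random field is proper if the distribution of `X t` is full for every `t ≠ 0`. -/
def ProperField {Ω : Type*} [MeasurableSpace Ω] (P : Measure Ω) {d m : ℕ}
    (X : (Fin d → ℝ) → Ω → (Fin m → ℝ)) : Prop :=
  ∀ t : Fin d → ℝ, t ≠ 0 → IsFullMeasure (P.map (X t))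

/-- Wide-sense operator-self-similarity with time-variable scaling exponent `E`. -/
def WOSS {Ω : Type*} [MeasurableSpace Ω] (P : Measure Ω) {d m : ℕ}
    (X : (Fin d → ℝ) → Ω → (Fin m → ℝ)) (E : Matrix (Fin d) (Fin d) ℝ) : Prop :=
  ∀ r : ℝ, 0 < r → ∃ (B : Matrix (Fin m) (Fin m) ℝ) (a : (Fin d → ℝ) → (Fin m → ℝ)),
    IdentFDD P (fun t ω => X (mpow r E *ᵥ t) ω) (fun t ω => B *ᵥ X t ω + a t)

/-- The operator norm `max_{|x|=1} |Q x|` (Euclidean norms) of a matrix. -/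
noncomputable def opNorm {n m : ℕ} (Q : Matrix (Fin m) (Fin n) ℝ) : ℝ :=
  ‖LinearMap.toContinuousLinearMap (Matrix.toEuclideanLin Q)‖

/-- The Euclidean norm of a vector in `ℝ^n`. -/
noncomputable def euclNorm {n : ℕ} (v : Fin n → ℝ) : ℝ :=
  Real.sqrt (∑ i, v i ^ 2)

/-- `G_r`: invertible matrices `A` such that `{X(r^E t)} ≡fdd {A X(t) + b(t)}`
for some deterministic function `b : ℝ^d → ℝ^m`. -/
def GSet {Ω : Type*} [MeasurableSpace Ω] (P : Measure Ω) {d m : ℕ}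
    (X : (Fin d → ℝ) → Ω → (Fin m → ℝ)) (E : Matrix (Fin d) (Fin d) ℝ)
    (r : ℝ) : Set (Matrix (Fin m) (Fin m) ℝ) :=
  {A | IsUnit A ∧ ∃ b : (Fin d → ℝ) → (Fin m → ℝ),
    IdentFDD P (fun t ω => X (mpow r E *ᵥ t) ω) (fun t ω => A *ᵥ X t ω + b t)}

/-- `G = ⋃_{r>0} G_r`. -/
def GAll {Ω : Type*} [MeasurableSpace Ω] (P : Measure Ω) {d m : ℕ}
    (X : (Fin d → ℝ) → Ω → (Fin m → ℝ)) (E : Matrix (Fin d) (Fin d) ℝ) :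
    Set (Matrix (Fin m) (Fin m) ℝ) :=
  ⋃ r ∈ Set.Ioi (0 : ℝ), GSet P X E r

/-- A radial part `τ` under the operator `E`. -/
structure IsRadialPart {d : ℕ} (E : Matrix (Fin d) (Fin d) ℝ)
    (τ : (Fin d → ℝ) → ℝ) : Prop where
  continuous : Continuous τ
  nonneg : ∀ x, 0 ≤ τ x
  pos : ∀ x : Fin d → ℝ, x ≠ 0 → 0 < τ x
  map_zero : τ 0 = 0
  even : ∀ x, τ (-x) = τ x
  scaling : ∀ r : ℝ, 0 < r → ∀ x, τ (mpow r E *ᵥ x) = r * τ x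
  isCompact_sphere : IsCompact {x | τ x = 1}
  zero_not_mem : (0 : Fin d → ℝ) ∉ {x | τ x = 1}
  tendsto_atTop : ∀ M : ℝ, ∃ R : ℝ, ∀ x : Fin d → ℝ, R ≤ ‖x‖ → M ≤ τ x
  tendsto_zero : Tendsto τ (𝓝 0) (𝓝 0)

/-- `φ` is `E`-homogeneous: `φ(r^E x) = r φ(x)` for all `r > 0` and `x ≠ 0`. -/
def EHomogeneous {d : ℕ} (E : Matrix (Fin d) (Fin d) ℝ)
    (φ : (Fin d → ℝ) → ℝ) : Prop :=
  ∀ r : ℝ, 0 < r → ∀ x : Fin d → ℝ, x ≠ 0 → φ (mpow r E *ᵥ x) = r * φ x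

/-- `ψ` is `(β,E)`-admissible with respect to the radial part `τ`. -/
def Admissible {d : ℕ} (τ : (Fin d → ℝ) → ℝ) (β : ℝ)
    (ψ : (Fin d → ℝ) → ℝ) : Prop :=
  (∀ x : Fin d → ℝ, x ≠ 0 → 0 < ψ x) ∧
  ∀ A B : ℝ, 0 < A → A < B → ∃ C : ℝ, 0 < C ∧ ∀ y : Fin d → ℝ,
    A ≤ euclNorm y → euclNorm y ≤ B → ∀ x : Fin d → ℝ, τ x ≤ 1 →
      |ψ (x + y) - ψ y| ≤ C * τ x ^ β

/-!
Only one-dimensional marginals are needed. A probability measure on `ℝ^m` is moved by every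
nonzero translation (iterating the translation pushes a ball of mass `> 1/2` onto a disjoint
ball), so `X(r^E t) =ᵈ r^D X(t) + b_r(t)` determines `b_r(t)`. Since `r ↦ r^E` and `r ↦ r^D` are
multiplicative, computing the law of `X((r₁r₂)^E t)` directly and via `X(r₁^E (r₂^E t))` exhibits
it as two translates of the law of `(r₁r₂)^D X(t)`, which gives the cocycle equation.
-/

open ProbabilityTheory

lemma mpow_mul {n : ℕ} {r₁ r₂ : ℝ} (h₁ : 0 < r₁) (h₂ : 0 < r₂)
    (A : Matrix (Fin n) (Fin n) ℝ) :
    mpow (r₁ * r₂) A = mpow r₁ A * mpow r₂ A := by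
  rw [mpow, mpow, mpow, Real.log_mul h₁.ne' h₂.ne', add_smul]
  exact Matrix.exp_add_of_commute _ _ (((Commute.refl A).smul_left _).smul_right _)

lemma measurable_mulVec {m n : ℕ} (M : Matrix (Fin m) (Fin n) ℝ) :
    Measurable (M *ᵥ ·) :=
  (continuous_const.matrix_mulVec continuous_id).measurable

lemma IdentFDD.identDistrib {Ω T β : Type*} [MeasurableSpace Ω] [MeasurableSpace β]
    {P : Measure Ω} {Y Z : T → Ω → β} (h : IdentFDD P Y Z)
    (hY : ∀ t, Measurable (Y t)) (hZ : ∀ t, Measurable (Z t)) (t : T) :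
    IdentDistrib (Y t) (Z t) P P := by
  refine ⟨(hY t).aemeasurable, (hZ t).aemeasurable, ?_⟩
  have hev : Measurable fun v : Fin 1 → β => v 0 := measurable_pi_apply 0
  have h1 := congrArg (·.map fun v : Fin 1 → β => v 0) (h 1 fun _ => t)
  rwa [Measure.map_map hev (measurable_pi_lambda _ fun _ => hY t),
    Measure.map_map hev (measurable_pi_lambda _ fun _ => hZ t)] at h1

theorem eq_zero_of_map_add_right_eq {E : Type*} [NormedAddCommGroup E] [NormedSpace ℝ E]
    [MeasurableSpace E] [BorelSpace E] (ν : Measure E) [IsProbabilityMeasure ν] {c : E}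
    (h : ν.map (· + c) = ν) : c = 0 := by
  by_contra hc
  have hpres : ∀ k : ℕ, MeasurePreserving (· + k • c) ν ν := fun k => by
    rw [← add_right_iterate]
    exact (MeasurePreserving.mk (measurable_add_const c) h).iterate k
  obtain ⟨R, hR⟩ : ∃ R : ℕ, 1 / 2 < ν (Metric.closedBall 0 R) := by
    have hmono : Monotone fun n : ℕ => Metric.closedBall (0 : E) n :=
      fun _ _ hab => Metric.closedBall_subset_closedBall (Nat.cast_le.mpr hab)
    have hlim := tendsto_measure_iUnion_atTop (μ := ν) hmono
    rw [Metric.iUnion_closedBall_nat, measure_univ] at hlim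
    exact (hlim.eventually <| lt_mem_nhds <|
      ENNReal.half_lt_self one_ne_zero ENNReal.one_ne_top).exists
  obtain ⟨k, hk⟩ := exists_nat_gt (2 * R / ‖c‖)
  have hpre : (· + k • c) ⁻¹' Metric.closedBall (0 : E) R = Metric.closedBall (-(k • c)) R := by
    ext x
    simp [dist_eq_norm]
  have hdisj : Disjoint (Metric.closedBall (0 : E) R) (Metric.closedBall (-(k • c)) R) := by
    apply Metric.closedBall_disjoint_closedBall
    rw [dist_zero_left, norm_neg, RCLike.norm_nsmul ℝ]
    have := (div_lt_iff₀ (norm_pos_iff.mpr hc)).mp hk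
    simp only [nsmul_eq_mul]
    linarith
  have hball : ν (Metric.closedBall (-(k • c)) R) = ν (Metric.closedBall 0 R) := by
    rw [← hpre, (hpres k).measure_preimage measurableSet_closedBall.nullMeasurableSet]
  have hunion := measure_union hdisj (μ := ν) measurableSet_closedBall
  rw [hball] at hunion
  refine lt_irrefl (1 : ℝ≥0∞) ?_
  calc 1 = 1 / 2 + 1 / 2 := (ENNReal.add_halves 1).symm
    _ < ν (Metric.closedBall 0 R) + ν (Metric.closedBall 0 R) := ENNReal.add_lt_add hR hR
    _ = ν (Metric.closedBall 0 R ∪ Metric.closedBall (-(k • c)) R) := hunion.symm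
    _ ≤ 1 := prob_le_one

lemma IdentDistrib.eq_of_add_const {Ω E : Type*} [MeasurableSpace Ω] [NormedAddCommGroup E]
    [NormedSpace ℝ E] [MeasurableSpace E] [BorelSpace E] {P : Measure Ω} [IsProbabilityMeasure P]
    {Y : Ω → E} {a a' : E} (h : IdentDistrib (fun ω => Y ω + a) (fun ω => Y ω + a') P P) :
    a = a' := by
  have : IsProbabilityMeasure (P.map fun ω => Y ω + a) :=
    Measure.isProbabilityMeasure_map h.aemeasurable_fst
  refine (sub_eq_zero.mp (eq_zero_of_map_add_right_eq (P.map fun ω => Y ω + a) ?_)).symm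
  rw [AEMeasurable.map_map_of_aemeasurable (measurable_add_const _).aemeasurable
    h.aemeasurable_fst, h.map_eq]
  congr 1
  funext ω
  simp

section ShiftedScaling

variable {Ω : Type*} [MeasurableSpace Ω] {P : Measure Ω} {d m : ℕ}
  {X : (Fin d → ℝ) → Ω → (Fin m → ℝ)} {A E : Matrix (Fin d) (Fin d) ℝ}
  {B D : Matrix (Fin m) (Fin m) ℝ}

lemma identDistrib_of_identFDD_affine (hX : ∀ t, Measurable (X t))
    {a : (Fin d → ℝ) → Fin m → ℝ}
    (h : IdentFDD P (fun t ω => X (A *ᵥ t) ω) (fun t ω => B *ᵥ X t ω + a t)) (t : Fin d → ℝ) :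
    IdentDistrib (X (A *ᵥ t)) (fun ω => B *ᵥ X t ω + a t) P P :=
  h.identDistrib (fun _ => hX _) (fun u => ((measurable_mulVec B).comp (hX u)).add_const _) t

lemma shift_unique_of_identFDD [IsProbabilityMeasure P] (hX : ∀ t, Measurable (X t))
    {a a' : (Fin d → ℝ) → Fin m → ℝ}
    (ha : IdentFDD P (fun t ω => X (A *ᵥ t) ω) (fun t ω => B *ᵥ X t ω + a t))
    (ha' : IdentFDD P (fun t ω => X (A *ᵥ t) ω) (fun t ω => B *ᵥ X t ω + a' t)) :
    a = a' :=
  funext fun t => IdentDistrib.eq_of_add_const <|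
    (identDistrib_of_identFDD_affine hX ha t).symm.trans (identDistrib_of_identFDD_affine hX ha' t)

lemma shift_cocycle [IsProbabilityMeasure P] (hX : ∀ t, Measurable (X t))
    {b : ℝ → (Fin d → ℝ) → Fin m → ℝ}
    (hb : ∀ r : ℝ, 0 < r →
      IdentFDD P (fun t ω => X (mpow r E *ᵥ t) ω) (fun t ω => mpow r D *ᵥ X t ω + b r t))
    {r₁ r₂ : ℝ} (h₁ : 0 < r₁) (h₂ : 0 < r₂) (t : Fin d → ℝ) :
    b (r₁ * r₂) t = b r₁ (mpow r₂ E *ᵥ t) + mpow r₁ D *ᵥ b r₂ t := by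
  have hlaw (r : ℝ) (hr : 0 < r) := identDistrib_of_identFDD_affine hX (hb r hr)
  set s := mpow r₂ E *ᵥ t
  set g : (Fin m → ℝ) → Fin m → ℝ := fun v => mpow r₁ D *ᵥ v + b r₁ s
  have hg : Measurable g := (measurable_mulVec _).add_const _
  have hcomp : IdentDistrib (X (mpow (r₁ * r₂) E *ᵥ t)) (g ∘ X s) P P := by
    rw [mpow_mul h₁ h₂, ← Matrix.mulVec_mulVec]
    exact hlaw r₁ h₁ s
  have hiter : IdentDistrib (g ∘ X s) (g ∘ fun ω => mpow r₂ D *ᵥ X t ω + b r₂ t) P P :=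
    (hlaw r₂ h₂ t).comp hg
  refine IdentDistrib.eq_of_add_const (P := P) (Y := fun ω => mpow (r₁ * r₂) D *ᵥ X t ω) ?_
  convert (hlaw _ (mul_pos h₁ h₂) t).symm.trans (hcomp.trans hiter) using 2 with ω
  simp only [g, Function.comp, Matrix.mulVec_add, Matrix.mulVec_mulVec, mpow_mul h₁ h₂]
  abel

end ShiftedScaling

theorem woss_shift_unique_cocycle_general {d m : ℕ}
    {Ω : Type*} [MeasurableSpace Ω] (P : Measure Ω) [IsProbabilityMeasure P]
    (X : (Fin d → ℝ) → Ω → (Fin m → ℝ)) (hXmeas : ∀ t, Measurable (X t))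
    (E : Matrix (Fin d) (Fin d) ℝ)
    (D : Matrix (Fin m) (Fin m) ℝ)
    (b : ℝ → (Fin d → ℝ) → (Fin m → ℝ))
    (hfdd : ∀ r : ℝ, 0 < r →
      IdentFDD P (fun t ω => X (mpow r E *ᵥ t) ω)
        (fun t ω => mpow r D *ᵥ X t ω + b r t)) :
    (∀ b' : ℝ → (Fin d → ℝ) → (Fin m → ℝ),
      (∀ r : ℝ, 0 < r → ∀ t : Fin d → ℝ,
        ContinuousAt (fun p : ℝ × (Fin d → ℝ) => b' p.1 p.2) (r, t)) →
      (∀ r : ℝ, 0 < r →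
        IdentFDD P (fun t ω => X (mpow r E *ᵥ t) ω)
          (fun t ω => mpow r D *ᵥ X t ω + b' r t)) →
      ∀ r : ℝ, 0 < r → ∀ t : Fin d → ℝ, b' r t = b r t) ∧
    (∀ r₁ r₂ : ℝ, 0 < r₁ → 0 < r₂ → ∀ t : Fin d → ℝ,
      b (r₁ * r₂) t = b r₁ (mpow r₂ E *ᵥ t) + mpow r₁ D *ᵥ b r₂ t ∧
      b (r₁ * r₂) t = b r₂ (mpow r₁ E *ᵥ t) + mpow r₂ D *ᵥ b r₁ t) := by
  refine ⟨fun b' _ hb' r hr t => ?_, fun r₁ r₂ h₁ h₂ t => ⟨?_, ?_⟩⟩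
  · exact congrFun (shift_unique_of_identFDD hXmeas (hb' r hr) (hfdd r hr)) t
  · exact shift_cocycle hXmeas hfdd h₁ h₂ t
  · rw [mul_comm]
    exact shift_cocycle hXmeas hfdd h₂ h₁ t

/-- **Corollary 2.1.** The shift function `b_r(t)` of a w.o.s.s. field is uniquely
determined by `E` and `D` and satisfies the cocycle equation. -/
theorem woss_shift_unique_cocycle {d m : ℕ} (hd : 2 ≤ d) (hm : 2 ≤ m)
    {Ω : Type*} [MeasurableSpace Ω] (P : Measure Ω) [IsProbabilityMeasure P]
    (X : (Fin d → ℝ) → Ω → (Fin m → ℝ)) (hXmeas : ∀ t, Measurable (X t))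
    (E : Matrix (Fin d) (Fin d) ℝ) (hE : E ∈ QSet d)
    (hXc : StochContinuous P X) (hXp : ProperField P X)
    (hX : WOSS P X E)
    (D : Matrix (Fin m) (Fin m) ℝ) (hD : D ∈ MSet m)
    (b : ℝ → (Fin d → ℝ) → (Fin m → ℝ))
    (hbc : ∀ r : ℝ, 0 < r → ∀ t : Fin d → ℝ,
      ContinuousAt (fun p : ℝ × (Fin d → ℝ) => b p.1 p.2) (r, t))
    (hfdd : ∀ r : ℝ, 0 < r →
      IdentFDD P (fun t ω => X (mpow r E *ᵥ t) ω)
        (fun t ω => mpow r D *ᵥ X t ω + b r t)) :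
    (∀ b' : ℝ → (Fin d → ℝ) → (Fin m → ℝ),
      (∀ r : ℝ, 0 < r → ∀ t : Fin d → ℝ,
        ContinuousAt (fun p : ℝ × (Fin d → ℝ) => b' p.1 p.2) (r, t)) →
      (∀ r : ℝ, 0 < r →
        IdentFDD P (fun t ω => X (mpow r E *ᵥ t) ω)
          (fun t ω => mpow r D *ᵥ X t ω + b' r t)) →
      ∀ r : ℝ, 0 < r → ∀ t : Fin d → ℝ, b' r t = b r t) ∧
    (∀ r₁ r₂ : ℝ, 0 < r₁ → 0 < r₂ → ∀ t : Fin d → ℝ,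
      b (r₁ * r₂) t = b r₁ (mpow r₂ E *ᵥ t) + mpow r₁ D *ᵥ b r₂ t ∧
      b (r₁ * r₂) t = b r₂ (mpow r₁ E *ᵥ t) + mpow r₂ D *ᵥ b r₁ t) :=
  woss_shift_unique_cocycle_general P X hXmeas E D b hfdd
end

section
/- Let d ≥ 2, α > 0, E ∈ Q(ℝ^d) with q = trace(E), let φ : ℝ^d → [0,∞) be Borel measurable, E-homogeneous, with φ(x) > 0 for all x ≠ 0, let D be an m×m real matrix, and write A := D − (q/α)I. Then for every r > 0, every k ≥ 1, all x₁,…,x_k ∈ ℝ^d and θ₁,…,θ_k ∈ ℝ^m, the following identity of Lebesgue integrals with values in [0,∞] holds: ∫_{ℝ^d} |Σ_{j=1}^k (φ(r^E x_j − y)^A − φ(−y)^A)^* θ_j|^α dy = ∫_{ℝ^d} |Σ_{j=1}^k (r^D (φ(x_j − y)^A − φ(−y)^A))^* θ_j|^α dy, where s^M := exp((ln s)M) for s > 0, Q^* denotes the transpose of a matrix Q, and the terms where φ vanishes (which occur only on a Lebesgue-null set of y) are set to 0. -/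
open MeasureTheory Filter Matrix Topology Set
open scoped ENNReal NNReal

/-!
Substitute `y = r^E z`: the Jacobian is `det r^E = r^q`, because `det (exp M) = e^{trace M}`
(the function `t ↦ det (exp (t M))` satisfies `g' = (trace M) g`, `g 0 = 1`). For `z` outside the
finite set `{0, x₁, …, x_k}`, `E`-homogeneity gives `φ (r^E w) = r φ w` for `w = x_j - z` and
`w = -z`, and `(r s)^A = r^{-q/α} r^D s^A` for `A = D - (q/α) I`; so the left integrand at `r^E z`
is `(r^{-q/α})^α = r^{-q}` times the right integrand at `z`, which cancels the Jacobian.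
-/

section DetExp

open Polynomial NormedSpace

variable {n : Type*} [Fintype n] [DecidableEq n]

-- Matrices carry no global norm; any submultiplicative one serves for the calculus below.
attribute [local instance] Matrix.linftyOpNormedRing Matrix.linftyOpNormedAlgebra

theorem Matrix.differentiable_det : Differentiable ℝ fun A : Matrix n n ℝ => A.det := by
  have hentry (i j : n) : Differentiable ℝ fun A : Matrix n n ℝ => A i j :=
    (LinearMap.toContinuousLinearMap (entryLinearMap ℝ ℝ i j)).differentiable
  simp only [det_apply']
  fun_prop

theorem Matrix.hasDerivAt_det_one_add_smul (N : Matrix n n ℝ) :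
    HasDerivAt (fun t : ℝ => (1 + t • N).det) N.trace 0 := by
  have heval : (fun t : ℝ => (1 + t • N).det) =
      fun t => (det (1 + (X : ℝ[X]) • N.map C)).eval t := by
    funext t
    simp [eval_det, ← smul_eq_mul_diagonal]
  rw [heval, ← derivative_det_one_add_X_smul]
  exact Polynomial.hasDerivAt _ 0

/-- Both `t ↦ 1 + t • M` and `t ↦ exp (t • M)` pass through `1` with velocity `M`,
so `det` has the same derivative along them. -/
theorem Matrix.hasDerivAt_det_exp_smul_zero (M : Matrix n n ℝ) :
    HasDerivAt (fun t : ℝ => (exp (t • M)).det) M.trace 0 := by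
  have hdet := (differentiable_det (1 : Matrix n n ℝ)).hasFDerivAt
  have hline := hdet.comp_hasDerivAt_of_eq 0
    (((hasDerivAt_id (0 : ℝ)).smul_const M).const_add 1) (by simp)
  have hexp := hdet.comp_hasDerivAt_of_eq 0 (hasDerivAt_exp_smul_const (𝕂 := ℝ) M 0) (by simp)
  rw [one_smul] at hline
  rw [zero_smul, exp_zero, one_mul, hline.unique (hasDerivAt_det_one_add_smul M)] at hexp
  exact hexp

theorem Matrix.hasDerivAt_det_exp_smul (M : Matrix n n ℝ) (t : ℝ) :
    HasDerivAt (fun s : ℝ => (exp (s • M)).det) ((exp (t • M)).det * M.trace) t := by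
  have hmul : (fun s : ℝ => (exp (s • M)).det) =
      fun s => (exp (t • M)).det * (exp ((s - t) • M)).det := by
    funext s
    rw [← det_mul, ← exp_add_of_commute _ _ ((Commute.refl M).smul_left _ |>.smul_right _),
      ← add_smul, add_sub_cancel]
  have hzero := hasDerivAt_det_exp_smul_zero M
  rw [← sub_self t] at hzero
  rw [hmul]
  exact (hzero.comp_sub_const t t).const_mul _

theorem Matrix.det_exp (M : Matrix n n ℝ) : (exp M).det = Real.exp M.trace := by
  have hderiv (t : ℝ) :
      HasDerivAt (fun s => (exp (s • M)).det * Real.exp (-(s * M.trace))) 0 t := by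
    refine ((hasDerivAt_det_exp_smul M t).mul
      (hasDerivAt_mul_const M.trace).neg.exp).congr_deriv ?_
    simp only [Pi.neg_apply]
    ring
  have hconst := is_const_of_deriv_eq_zero (fun t => (hderiv t).differentiableAt)
    (fun t => (hderiv t).deriv) 1 0
  simp only [one_smul, one_mul, zero_smul, exp_zero, det_one, zero_mul, neg_zero,
    Real.exp_zero, mul_one] at hconst
  rw [← mul_right_inj' (Real.exp_pos (-M.trace)).ne', ← Real.exp_add, neg_add_cancel,
    Real.exp_zero, mul_comm, hconst]

end DetExp

theorem Matrix.exp_smul_one {n : Type*} [Fintype n] [DecidableEq n] (a : ℝ) :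
    NormedSpace.exp (a • (1 : Matrix n n ℝ)) = Real.exp a • 1 := by
  rw [← diagonal_one, ← diagonal_smul, exp_diagonal, ← diagonal_smul]
  congr 1
  funext i
  simp [Real.exp_eq_exp_ℝ]

section MatrixPower

variable {n : ℕ}

theorem mpow_mul_s17 {r s : ℝ} (hr : 0 < r) (hs : 0 < s) (A : Matrix (Fin n) (Fin n) ℝ) :
    mpow (r * s) A = mpow r A * mpow s A := by
  rw [mpow, Real.log_mul hr.ne' hs.ne', add_smul]
  exact exp_add_of_commute _ _ ((Commute.refl A).smul_left _ |>.smul_right _)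

theorem det_mpow {r : ℝ} (hr : 0 < r) (A : Matrix (Fin n) (Fin n) ℝ) :
    (mpow r A).det = r ^ A.trace := by
  rw [mpow, det_exp, trace_smul, smul_eq_mul, Real.rpow_def_of_pos hr]

theorem mpow_sub_smul_one {r : ℝ} (hr : 0 < r) (D : Matrix (Fin n) (Fin n) ℝ) (c : ℝ) :
    mpow r (D - c • 1) = r ^ (-c) • mpow r D := by
  have hsplit : Real.log r • (D - c • 1) = (-c * Real.log r) • 1 + Real.log r • D := by
    rw [smul_sub, smul_smul, sub_eq_neg_add, ← neg_smul, neg_mul, mul_comm]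
  rw [mpow, hsplit, exp_add_of_commute _ _ ((Commute.one_left D).smul_left _ |>.smul_right _),
    exp_smul_one, smul_one_mul, mpow, Real.rpow_def_of_pos hr, mul_comm]

end MatrixPower

theorem lintegral_comp_mulVec {ι : Type*} [Fintype ι] [DecidableEq ι] {M : Matrix ι ι ℝ}
    (hM : M.det ≠ 0) (F : (ι → ℝ) → ℝ≥0∞) :
    ∫⁻ z, F (M *ᵥ z) = ENNReal.ofReal |M.det|⁻¹ * ∫⁻ y, F y := by
  have hf : LinearMap.det (toLin' M) ≠ 0 := by rwa [LinearMap.det_toLin']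
  let e := ((toLin' M).equivOfDetNeZero hf).toContinuousLinearEquiv.toHomeomorph.toMeasurableEquiv
  have hmap : Measure.map e volume = ENNReal.ofReal |M.det|⁻¹ • volume := by
    rw [← abs_inv, ← LinearMap.det_toLin']
    exact Measure.map_linearMap_addHaar_eq_smul_addHaar volume hf
  rw [← smul_eq_mul, ← lintegral_smul_measure, ← hmap, lintegral_map_equiv]
  rfl

theorem lintegral_eq_of_ae_comp_mulVec_eq {ι : Type*} [Fintype ι] [DecidableEq ι]
    {M : Matrix ι ι ℝ} (hM : M.det ≠ 0) {F G : (ι → ℝ) → ℝ≥0∞}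
    (h : ∀ᵐ z, F (M *ᵥ z) = ENNReal.ofReal |M.det|⁻¹ * G z) :
    ∫⁻ y, F y = ∫⁻ y, G y := by
  have hc : ENNReal.ofReal |M.det|⁻¹ ≠ 0 := by simpa using hM
  rw [← ENNReal.mul_right_inj hc ENNReal.ofReal_ne_top, ← lintegral_comp_mulVec hM,
    lintegral_congr_ae h, lintegral_const_mul' _ _ ENNReal.ofReal_ne_top]

theorem euclNorm_eq_norm {n : ℕ} (v : Fin n → ℝ) :
    euclNorm v = ‖(WithLp.toLp 2 v : EuclideanSpace ℝ (Fin n))‖ := by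
  simp [euclNorm, EuclideanSpace.norm_eq]

theorem euclNorm_nonneg {n : ℕ} (v : Fin n → ℝ) : 0 ≤ euclNorm v := Real.sqrt_nonneg _

theorem euclNorm_smul {n : ℕ} (c : ℝ) (v : Fin n → ℝ) : euclNorm (c • v) = |c| * euclNorm v := by
  simp [euclNorm_eq_norm, WithLp.toLp_smul, norm_smul]

namespace EHomogeneous

variable {d m : ℕ} {E : Matrix (Fin d) (Fin d) ℝ} {φ : (Fin d → ℝ) → ℝ}

theorem mpow_apply_mpow_mulVec (hφ : EHomogeneous E φ) (hpos : ∀ x, x ≠ 0 → 0 < φ x)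
    (D : Matrix (Fin m) (Fin m) ℝ) (c : ℝ) {r : ℝ} (hr : 0 < r) {u : Fin d → ℝ} (hu : u ≠ 0) :
    mpow (φ (mpow r E *ᵥ u)) (D - c • 1) = r ^ (-c) • (mpow r D * mpow (φ u) (D - c • 1)) := by
  rw [hφ r hr u hu, mpow_mul_s17 hr (hpos u hu), mpow_sub_smul_one hr, smul_mul_assoc]

theorem kernel_mpow_mulVec (hφ : EHomogeneous E φ) (hpos : ∀ x, x ≠ 0 → 0 < φ x)
    (D : Matrix (Fin m) (Fin m) ℝ) (c : ℝ) {r : ℝ} (hr : 0 < r) {u v : Fin d → ℝ}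
    (hu : u ≠ 0) (hv : v ≠ 0) (θ : Fin m → ℝ) :
    (if φ (mpow r E *ᵥ u) = 0 ∨ φ (mpow r E *ᵥ v) = 0 then 0
      else (mpow (φ (mpow r E *ᵥ u)) (D - c • 1) - mpow (φ (mpow r E *ᵥ v)) (D - c • 1))ᵀ *ᵥ θ)
    = r ^ (-c) • (if φ u = 0 ∨ φ v = 0 then 0
      else (mpow r D * (mpow (φ u) (D - c • 1) - mpow (φ v) (D - c • 1)))ᵀ *ᵥ θ) := by
  have hne {w : Fin d → ℝ} (hw : w ≠ 0) : φ w ≠ 0 := (hpos w hw).ne'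
  have hne' {w : Fin d → ℝ} (hw : w ≠ 0) : φ (mpow r E *ᵥ w) ≠ 0 := by
    rw [hφ r hr w hw]
    exact mul_ne_zero hr.ne' (hne hw)
  rw [if_neg (not_or.mpr ⟨hne' hu, hne' hv⟩), if_neg (not_or.mpr ⟨hne hu, hne hv⟩),
    mpow_apply_mpow_mulVec hφ hpos D c hr hu, mpow_apply_mpow_mulVec hφ hpos D c hr hv,
    ← smul_sub, ← mul_sub, transpose_smul, smul_mulVec]

end EHomogeneous

theorem movingAverage_scaling_identity_general {d m : ℕ} (hd : 2 ≤ d)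
    (α : ℝ) (hα : 0 < α)
    (E : Matrix (Fin d) (Fin d) ℝ)
    (φ : (Fin d → ℝ) → ℝ)
    (hφh : EHomogeneous E φ) (hφpos : ∀ x : Fin d → ℝ, x ≠ 0 → 0 < φ x)
    (D A : Matrix (Fin m) (Fin m) ℝ)
    (hA : A = D - (Matrix.trace E / α) • 1) :
    ∀ r : ℝ, 0 < r → ∀ k : ℕ, 1 ≤ k →
      ∀ (x : Fin k → (Fin d → ℝ)) (θ : Fin k → (Fin m → ℝ)),
      (∫⁻ y : Fin d → ℝ, ENNReal.ofReal
        (euclNorm (∑ j : Fin k,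
          if φ (mpow r E *ᵥ x j - y) = 0 ∨ φ (-y) = 0 then 0
          else (mpow (φ (mpow r E *ᵥ x j - y)) A - mpow (φ (-y)) A)ᵀ *ᵥ θ j) ^ α))
      = ∫⁻ y : Fin d → ℝ, ENNReal.ofReal
        (euclNorm (∑ j : Fin k,
          if φ (x j - y) = 0 ∨ φ (-y) = 0 then 0
          else (mpow r D * (mpow (φ (x j - y)) A - mpow (φ (-y)) A))ᵀ *ᵥ θ j) ^ α) := by
  intro r hr k _ x θ
  subst hA
  have hdet : (mpow r E).det = r ^ E.trace := det_mpow hr E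
  refine lintegral_eq_of_ae_comp_mulVec_eq (by rw [hdet]; positivity) ?_
  have : Nonempty (Fin d) := ⟨⟨0, by omega⟩⟩
  filter_upwards [measure_eq_zero_iff_ae_notMem.mp (((finite_range x).insert 0).measure_zero _)]
    with z hz
  simp only [mem_insert_iff, mem_range, not_or, not_exists] at hz
  simp only [← mulVec_sub, ← mulVec_neg]
  rw [Finset.sum_congr rfl fun j _ => hφh.kernel_mpow_mulVec hφpos D _ hr
    (sub_ne_zero.mpr (hz.2 j)) (neg_ne_zero.mpr hz.1) (θ j),
    ← Finset.smul_sum, euclNorm_smul, abs_of_pos (by positivity),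
    Real.mul_rpow (by positivity) (euclNorm_nonneg _), ← Real.rpow_mul hr.le, hdet,
    abs_of_pos (by positivity), ← Real.rpow_neg hr.le, ENNReal.ofReal_mul (by positivity)]
  congr 3
  field_simp

/-- **Theorem 2.5, step (iii).** The change-of-variables identity showing
operator-self-similarity of the moving-average field: with `A = D - (q/α)I`, the stable
integrals of the scaled integrands coincide. -/
theorem movingAverage_scaling_identity {d m : ℕ} (hd : 2 ≤ d)
    (α : ℝ) (hα : 0 < α)
    (E : Matrix (Fin d) (Fin d) ℝ) (hE : E ∈ QSet d)
    (φ : (Fin d → ℝ) → ℝ) (hφm : Measurable φ) (hφnn : ∀ x, 0 ≤ φ x)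
    (hφh : EHomogeneous E φ) (hφpos : ∀ x : Fin d → ℝ, x ≠ 0 → 0 < φ x)
    (D A : Matrix (Fin m) (Fin m) ℝ)
    (hA : A = D - (Matrix.trace E / α) • 1) :
    ∀ r : ℝ, 0 < r → ∀ k : ℕ, 1 ≤ k →
      ∀ (x : Fin k → (Fin d → ℝ)) (θ : Fin k → (Fin m → ℝ)),
      (∫⁻ y : Fin d → ℝ, ENNReal.ofReal
        (euclNorm (∑ j : Fin k,
          if φ (mpow r E *ᵥ x j - y) = 0 ∨ φ (-y) = 0 then 0
          else (mpow (φ (mpow r E *ᵥ x j - y)) A - mpow (φ (-y)) A)ᵀ *ᵥ θ j) ^ α))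
      = ∫⁻ y : Fin d → ℝ, ENNReal.ofReal
        (euclNorm (∑ j : Fin k,
          if φ (x j - y) = 0 ∨ φ (-y) = 0 then 0
          else (mpow r D * (mpow (φ (x j - y)) A - mpow (φ (-y)) A))ᵀ *ᵥ θ j) ^ α) :=
  movingAverage_scaling_identity_general hd α hα E φ hφh hφpos D A hA
end
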